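/- Let R be a commutative ring, let n ≥ 1, and let Ω and U be n×n matrices over R. For every j ≥ 1, the coefficient of b in the polynomial c_j(−(Ω + b·U)) ∈ R[b] (the matrices Ω + b·U being taken over the polynomial ring R[b]) equals Σ_{k=0}^{j−1} (−1)^{j+k} · Tr(Ω^k · U) · c_{j−k−1}(Ω). -/

import Mathlib

open Polynomial Matrix Finset

/-- For an `n × n` matrix `M` over a commutative ring `R`, `chernCoeff j M` is the
coefficient of `x^j` in `det (I + x • M) ∈ R[x]`.  In particular `chernCoeff 0 M = 1`
and `chernCoeff 1 M = trace M`.  These model the Chern forms `c_j(Ω)` of a curvature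
matrix `Ω`. -/
noncomputable def chernCoeff {R : Type*} [CommRing R] {n : ℕ} (j : ℕ)
    (M : Matrix (Fin n) (Fin n) R) : R :=
  (Matrix.det (1 + (Polynomial.X : Polynomial R) • M.map Polynomial.C)).coeff j

section Aux

variable {ι : Type*} [DecidableEq ι] [Fintype ι] {S : Type*} [CommRing S]

lemma aux_det_updateRow_eq (A : Matrix ι ι S) (i : ι) (v : ι → S) :
    (A.updateRow i v).det = ∑ j, v j * adjugate A j i := by
  have h1 : ∀ j : ι, (Pi.single j (v j) : ι → S) = v j • (Pi.single j 1 : ι → S) := fun j => by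
    ext k; by_cases h : k = j <;> simp [Pi.single_apply, h]
  have h2 : v = ∑ j, Pi.single j (v j) := by ext k; simp [Pi.single_apply]
  calc (A.updateRow i v).det = cramer Aᵀ v i := (cramer_transpose_apply A v i).symm
    _ = (∑ j, cramer Aᵀ (Pi.single j (v j))) i := by rw [← map_sum, ← h2]
    _ = ∑ j, v j * adjugate A j i := by
        rw [Finset.sum_apply]
        refine Finset.sum_congr rfl fun j _ => ?_
        rw [h1 j, LinearMap.map_smul, Pi.smul_apply, smul_eq_mul, adjugate_def]
        rfl

lemma aux_piecewise_smul_det (f : MultilinearMap S[X] (fun _ : ι => (ι → S[X])) S[X])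
    (c : S[X]) (b : ι → ι → S[X]) :
    ∀ (s : Finset ι) (a : ι → ι → S[X]),
      f (s.piecewise (fun i => c • b i) a) = c ^ s.card • f (s.piecewise b a) := by
  intro s
  induction s using Finset.induction_on with
  | empty => intro a; simp
  | @insert i s hi ih =>
    intro a
    rw [Finset.piecewise_insert, Finset.piecewise_insert, f.map_update_smul,
      Finset.update_piecewise_of_notMem _ _ _ hi, ih,
      ← Finset.update_piecewise_of_notMem _ _ _ hi, Finset.card_insert_of_notMem hi,
      pow_succ, smul_smul, mul_comm]

lemma aux_coeff_one_det (A B : Matrix ι ι S) :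
    (det (A.map (C : S →+* S[X]) + (X : S[X]) • B.map (C : S →+* S[X]))).coeff 1 =
      trace (adjugate A * B) := by
  have main : (det (A.map (C : S →+* S[X]) + (X : S[X]) • B.map (C : S →+* S[X]))).coeff 1 =
      ∑ i, (A.updateRow i (B i)).det := by
    set f : MultilinearMap S[X] (fun _ : ι => (ι → S[X])) S[X] :=
      (Matrix.detRowAlternating : ((ι → S[X]) [⋀^ι]→ₗ[S[X]] S[X])).toMultilinearMap with hf
    have hdet : det (A.map (C : S →+* S[X]) + (X : S[X]) • B.map C)
        = f (@HAdd.hAdd (ι → ι → S[X]) (ι → ι → S[X]) (ι → ι → S[X]) _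
            ((X : S[X]) • B.map C : Matrix ι ι S[X]) (A.map C : Matrix ι ι S[X])) := by
      rw [add_comm]; rfl
    rw [hdet]
    erw [f.map_add_univ]
    have key : ∀ s : Finset ι,
        f (s.piecewise ((X : S[X]) • B.map C : Matrix ι ι S[X]) (A.map C)) =
          X ^ s.card * C (det (Matrix.of (s.piecewise B A))) := by
      intro s
      have h1 : (s.piecewise ((X : S[X]) • B.map C : Matrix ι ι S[X]) (A.map C))
          = s.piecewise (fun i => (X : S[X]) • (B.map C : Matrix ι ι S[X]) i) (A.map C) := by
        rfl
      rw [h1, aux_piecewise_smul_det f X (fun i => (B.map C : Matrix ι ι S[X]) i) s (A.map C)]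
      have h2 : (s.piecewise (fun i => (B.map C : Matrix ι ι S[X]) i) (A.map C))
          = ((Matrix.of (s.piecewise B A)).map (C : S →+* S[X]) : Matrix ι ι S[X]) := by
        funext i j
        by_cases h : i ∈ s <;> simp [Finset.piecewise, h, Matrix.map_apply]
      rw [h2, smul_eq_mul]
      congr 1
      exact ((C : S →+* S[X]).map_det _).symm
    simp only [finset_sum_coeff, key]
    have key2 : ∀ s : Finset ι,
        (X ^ s.card * C (det (Matrix.of (s.piecewise B A)))).coeff 1 =
          ∑ i, if s = {i} then (A.updateRow i (B i)).det else 0 := by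
      intro s
      rw [mul_comm, coeff_C_mul, coeff_X_pow]
      by_cases h1 : s.card = 1
      · obtain ⟨i, rfl⟩ := Finset.card_eq_one.mp h1
        rw [Finset.sum_eq_single i]
        · have h3 : Matrix.of (({i} : Finset ι).piecewise B A) = A.updateRow i (B i) := by
            funext k j
            by_cases h : k = i <;> simp [Finset.piecewise, h, Matrix.updateRow_apply]
          simp [h3]
        · intro b' _ hb'
          rw [if_neg (fun hh => hb' (Finset.singleton_inj.mp hh).symm)]
        · intro h; exact absurd (Finset.mem_univ i) h
      · have h2 : (1 : ℕ) ≠ s.card := fun hh => h1 hh.symm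
        rw [if_neg h2, mul_zero]
        symm
        refine Finset.sum_eq_zero fun i _ => ?_
        rw [if_neg (fun hh => h1 (by rw [hh]; simp))]
    simp only [key2]
    rw [Finset.sum_comm]
    refine Finset.sum_congr rfl fun i _ => ?_
    rw [Finset.sum_ite_eq' Finset.univ ({i} : Finset ι)
      (fun _ => (A.updateRow i (B i)).det), if_pos (Finset.mem_univ _)]
  rw [main]
  simp only [aux_det_updateRow_eq, Matrix.trace, Matrix.diag, Matrix.mul_apply]
  rw [Finset.sum_comm]
  exact Finset.sum_congr rfl fun i _ => Finset.sum_congr rfl fun k _ => mul_comm _ _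

/-- Swapping the two variables of an iterated polynomial ring, coefficient-wise. -/
lemma aux_coeff_swap {R : Type*} [CommRing R] (p : Polynomial (Polynomial R)) (i j : ℕ) :
    (((Polynomial.eval₂RingHom (Polynomial.mapRingHom (C : R →+* R[X]))
        (C (X : R[X]))) p).coeff i).coeff j = (p.coeff j).coeff i := by
  induction p using Polynomial.induction_on' with
  | add p q hp hq => simp only [map_add, coeff_add, hp, hq]
  | monomial k a =>
    rw [coe_eval₂RingHom, eval₂_monomial, ← map_pow, coeff_mul_C, coe_mapRingHom, coeff_map,
      coeff_C_mul, coeff_X_pow, coeff_monomial]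
    by_cases h : k = j
    · subst h; simp
    · rw [if_neg h, if_neg (fun hh => h hh.symm)]
      simp

/-- Coefficients of `p(-X)`. -/
lemma aux_coeff_neg_X {R : Type*} [CommRing R] (p : R[X]) (m : ℕ) :
    ((Polynomial.eval₂RingHom (C : R →+* R[X]) (-X : R[X])) p).coeff m
      = (-1) ^ m * p.coeff m := by
  induction p using Polynomial.induction_on' with
  | add p q hp hq => simp only [map_add, coeff_add, hp, hq, mul_add]
  | monomial k a =>
    rw [coe_eval₂RingHom, eval₂_monomial, neg_pow, coeff_monomial]
    rw [show C a * ((-1 : R[X]) ^ k * X ^ k) = ((-1 : R[X]) ^ k) * (C a * X ^ k) by ring]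
    have hneg : ((-1 : R[X]) ^ k) = C ((-1 : R) ^ k) := by simp
    rw [hneg, coeff_C_mul, coeff_C_mul, coeff_X_pow]
    by_cases h : k = m
    · subst h; simp
    · rw [if_neg (fun hh => h hh.symm), if_neg h]
      simp

lemma aux_det_one_sub {R : Type*} [CommRing R] {n : ℕ} (Ω : Matrix (Fin n) (Fin n) R) (m : ℕ) :
    (det ((1 : Matrix (Fin n) (Fin n) R[X]) - (X : R[X]) • Ω.map C)).coeff m
      = (-1) ^ m * chernCoeff m Ω := by
  set σ : R[X] →+* R[X] := Polynomial.eval₂RingHom (C : R →+* R[X]) (-X : R[X]) with hσ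
  have hmat : ((1 : Matrix (Fin n) (Fin n) R[X]) + (X : R[X]) • Ω.map C).map σ
      = (1 : Matrix (Fin n) (Fin n) R[X]) - (X : R[X]) • Ω.map C := by
    funext i k
    by_cases h : i = k <;>
      simp [Matrix.map_apply, Matrix.one_apply, h, hσ, sub_eq_add_neg]
  have hdet : det ((1 : Matrix (Fin n) (Fin n) R[X]) - (X : R[X]) • Ω.map C)
      = σ (det ((1 : Matrix (Fin n) (Fin n) R[X]) + (X : R[X]) • Ω.map C)) := by
    rw [σ.map_det, RingHom.mapMatrix_apply, hmat]
  rw [hdet, aux_coeff_neg_X]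
  rfl

end Aux

/-- Lemma 2.1 of the paper: for `j ≥ 1`, the first-order coefficient in `b` of
`c_j(-(Ω + b·U))` equals `∑_{k=0}^{j-1} (-1)^{j+k} Tr(Ω^k U) c_{j-k-1}(Ω)`. -/
theorem chernCoeff_deriv {R : Type*} [CommRing R] {n : ℕ} (hn : 1 ≤ n)
    (Ω U : Matrix (Fin n) (Fin n) R) (j : ℕ) (hj : 1 ≤ j) :
    (chernCoeff j
        (-(Ω.map Polynomial.C + (Polynomial.X : Polynomial R) • U.map Polynomial.C))).coeff 1 =
      ∑ k ∈ Finset.range j,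
        (-1 : R) ^ (j + k) * Matrix.trace (Ω ^ k * U) * chernCoeff (j - k - 1) Ω := by
  classical
  set M : Matrix (Fin n) (Fin n) (Polynomial R) :=
    -(Ω.map Polynomial.C + (Polynomial.X : Polynomial R) • U.map Polynomial.C) with hM
  set A : Matrix (Fin n) (Fin n) (Polynomial R) :=
    1 - (X : R[X]) • Ω.map Polynomial.C with hA
  set B : Matrix (Fin n) (Fin n) (Polynomial R) :=
    -((X : R[X]) • U.map Polynomial.C) with hB
  have hdef : chernCoeff j M
      = (Matrix.det (1 + (X : Polynomial (Polynomial R)) • M.map C)).coeff j := rfl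
  rw [hdef]
  rw [← aux_coeff_swap (Matrix.det (1 + (X : Polynomial (Polynomial R)) • M.map C)) 1 j]
  have hmat : ((1 : Matrix (Fin n) (Fin n) (Polynomial (Polynomial R)))
        + (X : Polynomial (Polynomial R)) • M.map C).map
        (Polynomial.eval₂RingHom (Polynomial.mapRingHom (C : R →+* R[X])) (C (X : R[X])))
      = A.map (C : R[X] →+* Polynomial (Polynomial R))
        + (X : Polynomial (Polynomial R)) • B.map C := by
    funext i k
    simp only [Matrix.map_apply, Matrix.add_apply, Matrix.smul_apply, Matrix.neg_apply,
      Matrix.sub_apply, Matrix.one_apply, hM, hA, hB, smul_eq_mul]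
    by_cases h : i = k <;>
      simp only [if_pos, if_neg, h, coe_eval₂RingHom, eval₂_add, eval₂_mul, eval₂_one,
        eval₂_zero, eval₂_neg, eval₂_X, eval₂_C, _root_.map_neg, _root_.map_add,
        _root_.map_mul, _root_.map_sub, _root_.map_one, _root_.map_zero, coe_mapRingHom,
        map_C, map_X, if_true, if_false] <;>
      ring
  have hΦdet : (Polynomial.eval₂RingHom (Polynomial.mapRingHom (C : R →+* R[X]))
        (C (X : R[X]))) (Matrix.det (1 + (X : Polynomial (Polynomial R)) • M.map C))
      = det (A.map (C : R[X] →+* Polynomial (Polynomial R))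
          + (X : Polynomial (Polynomial R)) • B.map C) := by
    rw [RingHom.map_det, RingHom.mapMatrix_apply, hmat]
  rw [hΦdet, aux_coeff_one_det A B]
  -- Stage 2: compute the j-th coefficient of `trace (adjugate A * B)`.
  set Ω' : Matrix (Fin n) (Fin n) (Polynomial R) := Ω.map Polynomial.C with hΩ'
  set y : Matrix (Fin n) (Fin n) (Polynomial R) := (X : R[X]) • Ω' with hy
  set G : Matrix (Fin n) (Fin n) (Polynomial R) := ∑ k ∈ Finset.range (j+1), y ^ k with hG
  have hgeom : A * G = 1 - y ^ (j+1) := by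
    have h := mul_geom_sum y (j+1)
    have h2 : A * G = -((y - 1) * G) := by rw [hA, ← neg_sub y 1, neg_mul]
    rw [h2, h, neg_sub]
  have h4 : adjugate A = (det A) • G + adjugate A * y ^ (j+1) := by
    have h2 : adjugate A * (A * G) = det A • G := by
      rw [← Matrix.mul_assoc, Matrix.adjugate_mul, Matrix.smul_mul, Matrix.one_mul]
    rw [← h2, hgeom, Matrix.mul_sub, Matrix.mul_one]
    exact (sub_add_cancel _ _).symm
  have hexp : trace (adjugate A * B)
      = det A • trace (G * B) + trace ((adjugate A * y ^ (j+1)) * B) := by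
    conv_lhs => rw [h4]
    rw [Matrix.add_mul, trace_add, Matrix.smul_mul, trace_smul]
  have hterm2 : (trace ((adjugate A * y ^ (j+1)) * B)).coeff j = 0 := by
    have h5 : (adjugate A * y ^ (j+1)) * B
        = (X : R[X]) ^ (j+1) • ((adjugate A * Ω' ^ (j+1)) * B) := by
      rw [hy, _root_.smul_pow, Matrix.mul_smul, Matrix.smul_mul]
    rw [h5, trace_smul, smul_eq_mul, mul_comm, coeff_mul_X_pow']
    rw [if_neg (by omega)]
  have htrace_map : ∀ (V : Matrix (Fin n) (Fin n) R),
      trace (V.map (Polynomial.C : R →+* R[X])) = Polynomial.C (trace V) := fun V => by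
    have h6 := AddMonoidHom.map_trace (Polynomial.C : R →+* R[X]) V
    simpa [AddMonoidHom.mapMatrix_apply] using h6.symm
  have htr : ∀ k : ℕ, trace (y ^ k * B)
      = -((X : R[X]) ^ (k+1) * Polynomial.C (trace (Ω ^ k * U))) := by
    intro k
    have hmapk : Ω' ^ k * U.map Polynomial.C = (Ω ^ k * U).map (Polynomial.C : R →+* R[X]) := by
      rw [hΩ']
      simp only [← RingHom.mapMatrix_apply, ← _root_.map_pow, ← _root_.map_mul]
    have h7 : y ^ k * B = -(((X : R[X]) ^ (k+1)) • ((Ω ^ k * U).map (Polynomial.C : R →+* R[X]))) := by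
      rw [hy, hB, _root_.smul_pow, Matrix.mul_neg, Matrix.mul_smul, Matrix.smul_mul, ← hmapk,
        smul_smul, ← pow_succ']
    rw [h7, trace_neg, trace_smul, htrace_map, smul_eq_mul]
  rw [hexp, coeff_add, hterm2, add_zero, smul_eq_mul]
  have hGB : trace (G * B)
      = ∑ k ∈ Finset.range (j+1), -((X : R[X])^(k+1) * Polynomial.C (trace (Ω^k*U))) := by
    rw [hG, Matrix.sum_mul, trace_sum]
    exact Finset.sum_congr rfl fun k _ => htr k
  rw [hGB, Finset.mul_sum, finset_sum_coeff]
  have hper : ∀ k ∈ Finset.range (j+1),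
      (det A * -((X : R[X])^(k+1) * Polynomial.C (trace (Ω^k*U)))).coeff j
        = if k + 1 ≤ j then
            -(trace (Ω^k*U) * ((-1:R)^(j-k-1) * chernCoeff (j-k-1) Ω)) else 0 := by
    intro k _
    have e1 : det A * -((X : R[X])^(k+1) * Polynomial.C (trace (Ω^k*U)))
        = -((Polynomial.C (trace (Ω^k*U)) * det A) * (X : R[X])^(k+1)) := by ring
    rw [e1, coeff_neg, coeff_mul_X_pow']
    by_cases hk : k + 1 ≤ j
    · rw [if_pos hk, if_pos hk, coeff_C_mul]
      have hjk : j - (k + 1) = j - k - 1 := (Nat.sub_sub j k 1).symm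
      rw [hjk, hA, aux_det_one_sub]
    · rw [if_neg hk, if_neg hk, neg_zero]
  rw [Finset.sum_congr rfl hper, Finset.sum_range_succ, if_neg (by omega), add_zero]
  refine Finset.sum_congr rfl fun k hk => ?_
  have hk' : k < j := Finset.mem_range.mp hk
  rw [if_pos (by omega)]
  have hsign : ((-1:R))^(j+k) = -((-1:R)^(j-k-1)) := by
    have he : j + k = (j - k - 1) + (2*k+1) := by omega
    rw [he, pow_add, pow_succ, pow_mul, neg_one_sq, one_pow, one_mul, mul_neg_one]
  rw [hsign]; ring
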